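/- arXiv:1310.7354 — 4 statements merged into one kernel-verified Lean document; each statement's English description precedes it below -/
import Mathlib

section
/- In F₃[[X]], the power series g(X) = 1 − X⁻¹r(X³) − X⁻²(r(X³) − r(X³)²) (which lies in F₃[[X]] since r(X³) ≡ X³ mod X⁹) is the unique solution in F₃[[X]] of the equation X³g(X)³ + X·g(X)² + g(X) − 1 = 0. -/
open Classical in
/-- The power series `r(X³) = Σ_{m ≥ 0} X^{3^{m+1}} ∈ 𝔽₃[[X]]`. -/
noncomputable def rser3 : PowerSeries (ZMod 3) :=
  PowerSeries.mk fun n => if ∃ m : ℕ, n = 3 ^ (m + 1) then 1 else 0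

/-!
By Frobenius, `r(X³)³ = r(X³) - X³`. Writing `r(X³) = X²t`, this reads `t = X + X⁴t³`, which in
characteristic 3 is exactly the relation making `g₀ = 1 - Xt - t + X²t²` a root of
`X³g³ + Xg² + g - 1`; and `X²g₀ = X² - X r(X³) - (r(X³) - r(X³)²)`. The root is unique: the
difference of the values of the cubic at `g` and `g₀` is `g - g₀` times a series with constant
coefficient `1`, hence a unit.
-/

open PowerSeries

theorem Nat.exists_mul_eq_pow_succ_iff {p k : ℕ} (hp : p ≠ 0) (hk : k ≠ 1) :
    (∃ m, p * k = p ^ (m + 1)) ↔ ∃ m, k = p ^ (m + 1) := by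
  have (m : ℕ) : p * k = p ^ (m + 1) ↔ k = p ^ m := by
    rw [pow_succ', Nat.mul_left_cancel_iff (Nat.pos_of_ne_zero hp)]
  simp only [this]
  constructor
  · rintro ⟨_ | m, rfl⟩
    exacts [absurd (pow_zero p) hk, ⟨m, rfl⟩]
  · rintro ⟨m, rfl⟩
    exact ⟨m + 1, rfl⟩

theorem PowerSeries.map_frobenius_expand {R : Type*} [CommRing R] (p : ℕ) [ExpChar R p]
    (hp : p ≠ 0) (f : R⟦X⟧) : map (frobenius R p) (expand p hp f) = f ^ p :=
  MvPowerSeries.map_frobenius_expand p hp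

section Cubic

variable {R : Type*} [CommRing R]

noncomputable def cubic (g : R⟦X⟧) : R⟦X⟧ := X ^ 3 * g ^ 3 + X * g ^ 2 + g - 1

theorem cubic_eq_zero_iff_eq {g₀ : R⟦X⟧} (h₀ : cubic g₀ = 0) (g : R⟦X⟧) :
    cubic g = 0 ↔ g = g₀ := by
  refine ⟨fun h => ?_, fun h => h ▸ h₀⟩
  have hu : IsUnit (X ^ 3 * (g ^ 2 + g * g₀ + g₀ ^ 2) + X * (g + g₀) + 1 : R⟦X⟧) := by
    rw [isUnit_iff_constantCoeff]
    simp
  rw [← sub_eq_zero, ← hu.mul_left_eq_zero]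
  unfold cubic at h h₀
  linear_combination h - h₀

theorem cubic_eq_zero_of_eq_X_add [CharP R 3] {t : R⟦X⟧} (ht : t = X + X ^ 4 * t ^ 3) :
    cubic (1 - X * t - t + X ^ 2 * t ^ 2) = 0 := by
  have : CharP R⟦X⟧ 3 := charP_of_injective_ringHom C_injective 3
  unfold cubic
  linear_combination (norm := (ring_nf; reduce_mod_char!))
    (-1 + X ^ 5 * t ^ 3 - X * (X - t - X ^ 4 * t ^ 3)) * ht

end Cubic

open Classical in
theorem coeff_rser3 (n : ℕ) : coeff n rser3 = if ∃ m : ℕ, n = 3 ^ (m + 1) then 1 else 0 :=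
  coeff_mk _ _

theorem not_exists_eq_three_pow_succ_of_lt {n : ℕ} (hn : n < 3) : ¬∃ m, n = 3 ^ (m + 1) :=
  fun ⟨m, hm⟩ => by
    have := Nat.one_lt_pow m.succ_ne_zero (by norm_num : 1 < 3)
    omega

theorem rser3_eq_X_pow_three_add_expand : rser3 = X ^ 3 + expand 3 three_ne_zero rser3 := by
  classical
  ext n
  rw [map_add, coeff_X_pow, coeff_rser3]
  obtain ⟨k, rfl⟩ | hn := em (3 ∣ n)
  · rw [coeff_expand_mul, coeff_rser3]
    by_cases hk : k = 1
    · subst hk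
      rw [if_pos ⟨0, rfl⟩, if_pos rfl,
        if_neg (not_exists_eq_three_pow_succ_of_lt (by norm_num)), add_zero]
    · rw [if_neg (show 3 * k ≠ 3 by omega), zero_add]
      exact if_congr (Nat.exists_mul_eq_pow_succ_iff three_ne_zero hk) rfl rfl
  · have : ¬∃ m, n = 3 ^ (m + 1) := fun ⟨m, hm⟩ => hn (hm ▸ dvd_pow_self 3 m.succ_ne_zero)
    rw [coeff_expand_of_not_dvd _ _ _ hn, if_neg this, if_neg (show n ≠ 3 by omega), add_zero]

theorem rser3_pow_three : rser3 ^ 3 = rser3 - X ^ 3 := by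
  rw [← map_frobenius_expand, ZMod.frobenius_zmod, map_id, id, eq_sub_iff_add_eq']
  exact rser3_eq_X_pow_three_add_expand.symm

theorem X_sq_dvd_rser3 : X ^ 2 ∣ rser3 :=
  X_pow_dvd_iff.mpr fun n hn => by
    rw [coeff_rser3, if_neg (not_exists_eq_three_pow_succ_of_lt (by omega))]

/-- `g(X) = 1 - X⁻¹ r(X³) - X⁻²(r(X³) - r(X³)²)` (equivalently,
`X²·g = X² - X·r(X³) - (r(X³) - r(X³)²)`) is the unique solution in `𝔽₃[[X]]` of
`X³g³ + Xg² + g - 1 = 0`. -/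
theorem stmt7 (g : PowerSeries (ZMod 3)) :
    PowerSeries.X ^ 3 * g ^ 3 + PowerSeries.X * g ^ 2 + g - 1 = 0 ↔
      PowerSeries.X ^ 2 * g =
        PowerSeries.X ^ 2 - PowerSeries.X * rser3 - (rser3 - rser3 ^ 2) := by
  obtain ⟨t, ht⟩ := X_sq_dvd_rser3
  have hX : (X : (ZMod 3)⟦X⟧) ^ 2 ≠ 0 := pow_ne_zero 2 X_ne_zero
  have ht_rel : t = X + X ^ 4 * t ^ 3 := by
    have h := rser3_pow_three
    rw [ht] at h
    exact mul_left_cancel₀ hX (by linear_combination -h)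
  have hg₀ : X ^ 2 * (1 - X * t - t + X ^ 2 * t ^ 2) =
      X ^ 2 - X * rser3 - (rser3 - rser3 ^ 2) := by
    rw [ht]; ring
  change cubic g = 0 ↔ _
  rw [cubic_eq_zero_iff_eq (cubic_eq_zero_of_eq_X_add ht_rel), ← mul_right_inj' hX, hg₀]
end

section
/- Define sᵢⱼ ∈ F₃ by Σ sᵢⱼ XⁱYʲ = (1 − X⁻¹r(X³) − X⁻²(r(X³) − r(X³)²))/(1 − XY³) in F₃[[X,Y]], and let tᵢⱼ = s_{3i,3j}. Then Σ tᵢⱼ XⁱYʲ = (1 − r(X)Y + (r(X)² − r(X))Y²)/(1 − XY³). -/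
open Classical in
/-- The two-variable power series `r(X) = Σ_{m ≥ 0} X^{3^m} ∈ 𝔽₃[[X,Y]]`. -/
noncomputable def rX : MvPowerSeries (Fin 2) (ZMod 3) :=
  fun s => if s 1 = 0 ∧ ∃ m : ℕ, s 0 = 3 ^ m then 1 else 0

open Classical in
/-- The two-variable power series `r(X³) = Σ_{m ≥ 0} X^{3^{m+1}} ∈ 𝔽₃[[X,Y]]`. -/
noncomputable def rX3 : MvPowerSeries (Fin 2) (ZMod 3) :=
  fun s => if s 1 = 0 ∧ ∃ m : ℕ, s 0 = 3 ^ (m + 1) then 1 else 0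

/-!
Multiplying the relation defining `S` by `X(1 + XY³ + X²Y⁶)` turns `1 - XY³` into
`1 - X³Y⁹` and sorts the right-hand side by the residue mod 3 of the exponent of `X`: it becomes
`F(X³, Y³) + X·G(X³, Y³) + X²·H(X³, Y³)`, because `r(X³)` is the 3-fold expansion of `r(X)`.
Extracting the coefficients at exponents divisible by 3 commutes with multiplication by a series
in `X³, Y³`, and kills the last two summands, leaving `X(1 - XY³)T = F(X, Y)`. Cancel `X`.
-/

namespace Finsupp

theorem exists_nsmul_eq_of_forall_dvd {σ : Type*} {p : ℕ} {a : σ →₀ ℕ} (h : ∀ i, p ∣ a i) :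
    ∃ b : σ →₀ ℕ, p • b = a :=
  ⟨a.mapRange (· / p) (Nat.zero_div p), by ext i; simp [Nat.mul_div_cancel' (h i)]⟩

end Finsupp

namespace MvPowerSeries

variable {σ R : Type*} [CommRing R] (p : ℕ)

noncomputable def contract : MvPowerSeries σ R →ₗ[R] MvPowerSeries σ R where
  toFun f n := coeff (p • n) f
  map_add' f g := by ext n; exact map_add (coeff (p • n)) f g
  map_smul' r f := by ext n; exact map_smul (coeff (p • n)) r f

theorem coeff_contract (f : MvPowerSeries σ R) (n : σ →₀ ℕ) :
    coeff n (contract p f) = coeff (p • n) f :=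
  rfl

theorem contract_X_pow (i : σ) {a : ℕ} (ha : ¬ p ∣ a) :
    contract p (X i ^ a : MvPowerSeries σ R) = 0 := by
  classical
  ext n
  rw [coeff_contract, coeff_X_pow, if_neg, map_zero]
  intro h
  exact ha ⟨n i, by simpa using (DFunLike.congr_fun h i).symm⟩

variable {p} (hp : p ≠ 0)

theorem contract_expand (f : MvPowerSeries σ R) : contract p (expand p hp f) = f := by
  ext n
  rw [coeff_contract, coeff_expand_smul]

theorem contract_expand_mul (f g : MvPowerSeries σ R) :
    contract p (expand p hp f * g) = f * contract p g := by
  classical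
  ext n
  rw [coeff_contract, coeff_mul, coeff_mul]
  symm
  refine Finset.sum_of_injOn (fun x ↦ (p • x.1, p • x.2)) ?_ ?_ ?_ ?_
  · rintro ⟨a, b⟩ - ⟨c, d⟩ - h
    simp only [Prod.mk.injEq] at h ⊢
    exact ⟨nsmul_right_injective hp h.1, nsmul_right_injective hp h.2⟩
  · rintro ⟨a, b⟩ hab
    simp only [Finset.mem_coe, Finset.HasAntidiagonal.mem_antidiagonal] at hab ⊢
    rw [← smul_add, hab]
  · rintro ⟨a, b⟩ hab hnot
    rw [Finset.HasAntidiagonal.mem_antidiagonal] at hab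
    by_contra hne
    -- a nonzero coefficient of `expand p f` sits at a multiple of `p`, and then so does `b`
    have ha : ∀ i, p ∣ a i := fun i ↦ by
      by_contra hi
      exact hne (by rw [coeff_expand_of_not_dvd p hp f hi, zero_mul])
    have hb : ∀ i, p ∣ b i := fun i ↦ (Nat.dvd_add_right (ha i)).mp
      ⟨n i, by simpa using DFunLike.congr_fun hab i⟩
    obtain ⟨a', rfl⟩ := Finsupp.exists_nsmul_eq_of_forall_dvd ha
    obtain ⟨b', rfl⟩ := Finsupp.exists_nsmul_eq_of_forall_dvd hb
    refine hnot ⟨(a', b'), ?_, rfl⟩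
    simpa using nsmul_right_injective hp (by rw [smul_add, hab] : p • (a' + b') = p • n)
  · rintro ⟨a, b⟩ -
    simp only [coeff_expand_smul, coeff_contract]

theorem contract_X_pow_mul_expand (i : σ) {a : ℕ} (ha : ¬ p ∣ a) (f : MvPowerSeries σ R) :
    contract p (X i ^ a * expand p hp f) = 0 := by
  rw [mul_comm, contract_expand_mul, contract_X_pow p i ha, mul_zero]

end MvPowerSeries

open MvPowerSeries

theorem rX3_eq_expand : rX3 = expand 3 (by decide) rX := by
  ext n
  by_cases h : ∀ i, 3 ∣ n i
  · obtain ⟨m, rfl⟩ := Finsupp.exists_nsmul_eq_of_forall_dvd h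
    rw [coeff_expand_smul]
    simp only [coeff_apply, rX3, rX, Finsupp.smul_apply, smul_eq_mul, pow_succ]
    congr 1
    exact propext ⟨fun ⟨_, k, _⟩ ↦ ⟨by omega, k, by omega⟩, fun ⟨_, k, _⟩ ↦ ⟨by omega, k, by omega⟩⟩
  · push Not at h
    obtain ⟨i, hi⟩ := h
    rw [coeff_expand_of_not_dvd _ _ _ hi, coeff_apply, rX3, if_neg]
    rintro ⟨h1, k, hk⟩
    fin_cases i
    · exact hi ⟨3 ^ k, by simp [hk, pow_succ, mul_comm]⟩
    · exact hi (by simp [h1])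

/-- If `S = (1 - X⁻¹r(X³) - X⁻²(r(X³) - r(X³)²))/(1 - XY³)` (expressed after clearing
denominators), with coefficients `s_{i,j}`, and `T` has coefficients `t_{i,j} = s_{3i,3j}`,
then `T = (1 - r(X)Y + (r(X)² - r(X))Y²)/(1 - XY³)`. -/
theorem stmt8 (S T : MvPowerSeries (Fin 2) (ZMod 3))
    (hS : (MvPowerSeries.X 0) ^ 2 * ((1 - MvPowerSeries.X 0 * (MvPowerSeries.X 1) ^ 3) * S) =
      (MvPowerSeries.X 0) ^ 2 - MvPowerSeries.X 0 * rX3 - (rX3 - rX3 ^ 2))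
    (hT : ∀ i j : ℕ,
      MvPowerSeries.coeff (Finsupp.single 0 i + Finsupp.single 1 j) T =
        MvPowerSeries.coeff (Finsupp.single 0 (3 * i) + Finsupp.single 1 (3 * j)) S) :
    (1 - MvPowerSeries.X 0 * (MvPowerSeries.X 1) ^ 3) * T =
      1 - rX * MvPowerSeries.X 1 + (rX ^ 2 - rX) * (MvPowerSeries.X 1) ^ 2 := by
  have h3 : (3 : ℕ) ≠ 0 := three_ne_zero
  have hT' : T = contract 3 S := by
    ext n
    obtain ⟨i, j, rfl⟩ : ∃ i j, n = Finsupp.single 0 i + Finsupp.single 1 j :=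
      ⟨n 0, n 1, by ext k; fin_cases k <;> simp⟩
    rw [hT, coeff_contract, smul_add, Finsupp.smul_single, Finsupp.smul_single, smul_eq_mul,
      smul_eq_mul]
  have key : expand 3 h3 (X 0 * (1 - X 0 * X 1 ^ 3)) * S =
      expand 3 h3 (X 0 * (1 - rX * X 1 + (rX ^ 2 - rX) * X 1 ^ 2))
      + X 0 ^ 1 * expand 3 h3 (rX ^ 2 - rX + X 0 * X 1 - X 0 * X 1 ^ 2 * rX)
      + X 0 ^ 2 * expand 3 h3 (X 0 * X 1 ^ 2 - rX - X 1 * rX + X 1 * rX ^ 2) := by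
    simp only [map_mul, map_sub, map_add, map_pow, map_one, expand_X, ← rX3_eq_expand]
    linear_combination X 0 * (1 + X 0 * X 1 ^ 3 + X 0 ^ 2 * X 1 ^ 6) * hS
  have hcontract := congrArg (contract 3) key
  rw [map_add, map_add, contract_expand_mul, contract_expand,
    contract_X_pow_mul_expand h3 0 (by decide), contract_X_pow_mul_expand h3 0 (by decide),
    ← hT', mul_assoc] at hcontract
  have hX : (X 0 : MvPowerSeries (Fin 2) (ZMod 3)) ≠ 0 := fun h ↦ by
    simpa using congrArg (coeff (Finsupp.single 0 1)) h
  exact mul_left_cancel₀ hX (by linear_combination hcontract)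
end

section
/- The polynomials fₙ(X) for 0 ≤ n < α, defined by f_{3t} = Xᵗ, f_{3t+1} = −r(X)Xᵗ, f_{3t+2} = (r(X)² − r(X))Xᵗ in F₃[X]/(X^α), span F₃[X]/(X^α) as an F₃-vector space. -/
open Classical in
/-- The power series `r(X) = Σ_{m ≥ 0} X^{3^m} ∈ 𝔽₃[[X]]`. -/
noncomputable def rser : PowerSeries (ZMod 3) :=
  PowerSeries.mk fun n => if ∃ m : ℕ, n = 3 ^ m then 1 else 0

/-- The ring `V = 𝔽₃[X]/(X^α)`. -/
noncomputable abbrev Vring (α : ℕ) : Type :=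
  Polynomial (ZMod 3) ⧸ Ideal.span {(Polynomial.X : Polynomial (ZMod 3)) ^ α}

/-- The image of `X` in `𝔽₃[X]/(X^α)`. -/
noncomputable def xbar (α : ℕ) : Vring α := Ideal.Quotient.mk _ Polynomial.X

/-- `r(X)` reduced mod `X^α`. -/
noncomputable def rbar (α : ℕ) : Vring α := Ideal.Quotient.mk _ (PowerSeries.trunc α rser)

/-- The elements `f₃ₜ = Xᵗ`, `f_{3t+1} = -r(X)Xᵗ`, `f_{3t+2} = (r(X)² - r(X))Xᵗ`. -/
noncomputable def fel (α n : ℕ) : Vring α :=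
  (if n % 3 = 0 then 1 else if n % 3 = 1 then -(rbar α) else (rbar α) ^ 2 - rbar α) *
    (xbar α) ^ (n / 3)

/-!
In `V = 𝔽₃[X]/(X^α)` the element `r` satisfies `r³ = r - X` (Frobenius sends `X^{3^m}` to
`X^{3^{m+1}}`). Hence `r^{a+3} Xᵗ = r^{a+1} Xᵗ - r^a X^{t+1}` lowers the `r`-degree without raising
the weight `3t + a`, and every `r^a Xᵗ` with `3t + a < α` lies in the span of the `fₙ`, which
give the cases `a < 3`. Since `r = X(1 + X·z)`, `r^j ≡ X^j` modulo `X^{j+1}V`, and a descending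
induction on `j` shows that `X^j V` lies in the span for every `j`.
-/

open Polynomial

theorem Nat.exists_eq_pow_iff {b : ℕ} (hb : 0 < b) (n : ℕ) :
    (∃ m, n = b ^ m) ↔ n = 1 ∨ b ∣ n ∧ ∃ m, n / b = b ^ m := by
  constructor
  · rintro ⟨_ | m, rfl⟩
    · exact .inl rfl
    · exact .inr ⟨dvd_pow_self b m.succ_ne_zero, m, by rw [pow_succ, Nat.mul_div_cancel _ hb]⟩
  · rintro (rfl | ⟨⟨k, rfl⟩, m, hm⟩)
    · exact ⟨0, rfl⟩
    · exact ⟨m + 1, by rw [Nat.mul_div_cancel_left _ hb] at hm; rw [hm, pow_succ']⟩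

section Nilpotent

variable {K A : Type*} [CommRing K] [CommRing A] [Algebra K A]

theorem Algebra.exists_eq_algebraMap_add_mul_of_adjoin_eq_top {x : A}
    (hx : Algebra.adjoin K {x} = ⊤) (v : A) : ∃ c w, v = algebraMap K A c + x * w := by
  have hv : v ∈ (aeval (R := K) x).range :=
    Algebra.adjoin_singleton_eq_range_aeval K x ▸ hx ▸ Algebra.mem_top
  obtain ⟨p, rfl⟩ := (AlgHom.mem_range _).1 hv
  refine ⟨p.coeff 0, aeval x p.divX, ?_⟩
  conv_lhs => rw [← X_mul_divX_add p]
  rw [map_add, map_mul, aeval_X, aeval_C, add_comm]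

theorem Submodule.eq_top_of_mul_one_add_mul_pow_mem {x z : A} {n : ℕ}
    (hx : Algebra.adjoin K {x} = ⊤) (hn : x ^ n = 0) (S : Submodule K A)
    (hS : ∀ j < n, (x * (1 + x * z)) ^ j ∈ S) : S = ⊤ := by
  suffices h : ∀ j ≤ n, ∀ v, x ^ j * v ∈ S by
    exact eq_top_iff.2 fun v _ => by simpa using h 0 n.zero_le v
  intro j hj
  induction hj using Nat.decreasingInduction with
  | self => simp [hn]
  | of_succ j hj ih =>
    have hxj : x ^ j ∈ S := by
      obtain ⟨c, hc⟩ := sub_one_dvd_pow_sub_one (1 + x * z) j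
      have : x ^ j = (x * (1 + x * z)) ^ j - x ^ (j + 1) * (z * c) := by
        rw [mul_pow]
        linear_combination (-x ^ j) * hc
      rw [this]
      exact sub_mem (hS j hj) (ih _)
    intro v
    obtain ⟨c, w, rfl⟩ := Algebra.exists_eq_algebraMap_add_mul_of_adjoin_eq_top hx v
    rw [mul_add, mul_comm, ← Algebra.smul_def, ← mul_assoc, ← pow_succ]
    exact add_mem (S.smul_mem c hxj) (ih w)

end Nilpotent

theorem pow_mul_pow_mem_of_pow_three_eq_sub {R A : Type*} [Ring R] [CommRing A] [Module R A]
    {r x : A} (hr : r ^ 3 = r - x) (S : Submodule R A) {N : ℕ}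
    (hS : ∀ i < 3, ∀ t, 3 * t + i < N → r ^ i * x ^ t ∈ S) (a t : ℕ) (h : 3 * t + a < N) :
    r ^ a * x ^ t ∈ S := by
  induction a using Nat.strong_induction_on generalizing t with
  | _ a ih =>
    rcases lt_or_ge a 3 with ha | ha
    · exact hS a ha t h
    obtain ⟨b, rfl⟩ := Nat.exists_eq_add_of_le' ha
    have : r ^ (b + 3) * x ^ t = r ^ (b + 1) * x ^ t - r ^ b * x ^ (t + 1) := by
      rw [pow_add, hr]
      ring
    rw [this]
    exact sub_mem (ih _ (by omega) t (by omega)) (ih _ (by omega) _ (by omega))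

section Quotient

variable (α : ℕ)

open Classical in
theorem coeff_trunc_rser (d : ℕ) :
    (PowerSeries.trunc α rser).coeff d = if d < α ∧ ∃ m, d = 3 ^ m then 1 else 0 := by
  simp only [PowerSeries.coeff_trunc, rser, PowerSeries.coeff_mk, ite_and]

theorem X_pow_dvd_trunc_rser_pow_three :
    X ^ α ∣ PowerSeries.trunc α rser ^ 3 - PowerSeries.trunc α rser + X := by
  rw [X_pow_dvd_iff]
  intro d hd
  rw [← ZMod.expand_card, coeff_add, coeff_sub, coeff_expand three_pos, coeff_X,
    coeff_trunc_rser, coeff_trunc_rser, Nat.exists_eq_pow_iff three_pos d]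
  have : d / 3 < α := (Nat.div_le_self d 3).trans_lt hd
  rcases eq_or_ne d 1 with rfl | hd1
  · simp [hd]
  · split_ifs <;> simp_all

theorem rbar_pow_three : rbar α ^ 3 = rbar α - xbar α := by
  have h : rbar α ^ 3 - rbar α + xbar α = 0 := by
    rw [rbar, xbar, ← map_pow, ← map_sub, ← map_add, Ideal.Quotient.eq_zero_iff_mem,
      Ideal.mem_span_singleton]
    exact X_pow_dvd_trunc_rser_pow_three α
  linear_combination h

theorem xbar_pow_self : xbar α ^ α = 0 := by
  rw [xbar, ← map_pow, Ideal.Quotient.eq_zero_iff_mem]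
  exact Ideal.mem_span_singleton_self _

theorem adjoin_xbar : Algebra.adjoin (ZMod 3) {xbar α} = ⊤ := by
  have h := Algebra.adjoin_image (ZMod 3)
    (Ideal.Quotient.mkₐ (ZMod 3) (Ideal.span {(X : (ZMod 3)[X]) ^ α})) {X}
  rwa [Set.image_singleton, adjoin_X, Algebra.map_top,
    (AlgHom.range_eq_top _).2 (Ideal.Quotient.mkₐ_surjective _ _)] at h

theorem exists_rbar_eq_xbar_mul : ∃ z, rbar α = xbar α * (1 + xbar α * z) := by
  obtain ⟨p, hp⟩ : X ∣ PowerSeries.trunc α rser := by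
    rw [X_dvd_iff, coeff_trunc_rser]
    exact if_neg fun ⟨_, m, hm⟩ => (pow_pos three_pos m).ne' hm.symm
  obtain ⟨w, hw⟩ : ∃ w, rbar α = xbar α * w :=
    ⟨Ideal.Quotient.mk _ p, by rw [rbar, xbar, hp, map_mul]⟩
  have h3 := rbar_pow_three α
  rw [hw] at h3 ⊢
  exact ⟨xbar α * w ^ 3, by linear_combination -h3⟩

theorem fel_three_mul (t : ℕ) : fel α (3 * t) = xbar α ^ t := by
  simp [fel]

theorem fel_three_mul_add_one (t : ℕ) : fel α (3 * t + 1) = -rbar α * xbar α ^ t := by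
  simp [fel, Nat.mul_add_div]

theorem fel_three_mul_add_two (t : ℕ) :
    fel α (3 * t + 2) = (rbar α ^ 2 - rbar α) * xbar α ^ t := by
  simp [fel, Nat.mul_add_div]

theorem rbar_pow_mul_xbar_pow_mem_span_fel (a t : ℕ) (h : 3 * t + a < α) :
    rbar α ^ a * xbar α ^ t ∈
      Submodule.span (ZMod 3) (Set.range fun n : Fin α => fel α n) := by
  have hfel (n : ℕ) (hn : n < α) :
      fel α n ∈ Submodule.span (ZMod 3) (Set.range fun n : Fin α => fel α n) :=
    Submodule.subset_span ⟨⟨n, hn⟩, rfl⟩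
  refine pow_mul_pow_mem_of_pow_three_eq_sub (rbar_pow_three α) _ (fun i hi t ht => ?_) a t h
  interval_cases i
  · simpa [fel_three_mul] using hfel (3 * t) (by omega)
  · convert neg_mem (hfel (3 * t + 1) (by omega)) using 1
    rw [fel_three_mul_add_one]
    ring
  · convert sub_mem (hfel (3 * t + 2) (by omega)) (hfel (3 * t + 1) (by omega)) using 1
    rw [fel_three_mul_add_two, fel_three_mul_add_one]
    ring

end Quotient

/-- The `fₙ(X)`, `0 ≤ n < α`, span `𝔽₃[X]/(X^α)` as an `𝔽₃`-vector space. -/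
theorem stmt11 (α : ℕ) :
    Submodule.span (ZMod 3) (Set.range fun n : Fin α => fel α (n : ℕ)) = ⊤ := by
  obtain ⟨z, hr⟩ := exists_rbar_eq_xbar_mul α
  refine Submodule.eq_top_of_mul_one_add_mul_pow_mem (z := z) (adjoin_xbar α) (xbar_pow_self α) _
    fun j hj => ?_
  simpa [← hr] using rbar_pow_mul_xbar_pow_mem_span_fel α j 0 (by omega)
end

section
/- Let d be a nonzero element of the ring of integers O of a complete nonarchimedean valued field, s a positive integer, and N = (nᵢⱼ)_{0≤i,j<3s} a matrix with nᵢⱼ ∈ dʲ·O for all i,j, and nᵢⱼ = 0 whenever 3 ∤ j. Write det(1 − TN) = Σ_α a_α T^α. Then a_α/d^{3α(α−1)/2} ∈ O for all α. -/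
/-!
Expanding `det (1 - T • N)` by the Leibniz formula, the coefficient of `T ^ α` is a signed sum of
products `∏ j ∈ t, -N (σ j) j` over permutations `σ` and `α`-element column sets `t`. Such a
product vanishes unless every `j ∈ t` is a multiple of `3`, and otherwise has norm at most
`‖d‖ ^ ∑ j ∈ t, j`; since `α` distinct multiples of `3` sum to at least `3 * α.choose 2`, the
ultrametric inequality bounds the whole sum by `‖d‖ ^ (3 * α.choose 2)`.
-/

open Polynomial Finset

theorem Polynomial.coeff_prod_X_mul_C_add_C {R ι : Type*} [CommSemiring R] [DecidableEq ι]
    (s : Finset ι) (a b : ι → R) (k : ℕ) :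
    (∏ i ∈ s, (X * C (b i) + C (a i))).coeff k =
      ∑ t ∈ s.powersetCard k, (∏ i ∈ t, b i) * ∏ i ∈ s \ t, a i := by
  have hterm : ∀ t ∈ s.powerset, (∏ i ∈ t, X * C (b i)) * ∏ i ∈ s \ t, C (a i) =
      C ((∏ i ∈ t, b i) * ∏ i ∈ s \ t, a i) * X ^ #t := by
    intro t _
    rw [prod_mul_distrib, prod_const, ← map_prod, ← map_prod, map_mul]
    ring
  rw [prod_add, sum_congr rfl hterm, finsetSum_coeff, powersetCard_eq_filter, sum_filter]
  simp only [coeff_C_mul_X_pow, eq_comm]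

theorem Matrix.norm_coeff_charpolyRev_le {n R : Type*} [Fintype n] [DecidableEq n]
    [NormedCommRing R] [NormOneClass R] [IsUltrametricDist R]
    (N : Matrix n n R) (c : n → ℝ) (hN : ∀ i j, ‖N i j‖ ≤ c j) {k : ℕ} {B : ℝ} (hB : 0 ≤ B)
    (hc : ∀ t : Finset n, #t = k → ∏ j ∈ t, c j ≤ B) :
    ‖N.charpolyRev.coeff k‖ ≤ B := by
  have hentry : ∀ i j, (1 - (X : R[X]) • N.map C) i j =
      X * C (-N i j) + C ((1 : Matrix n n R) i j) := by
    intro i j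
    rw [Matrix.sub_apply, Matrix.smul_apply, Matrix.map_apply, Matrix.one_apply,
      Matrix.one_apply, apply_ite C, map_neg, map_one, map_zero, smul_eq_mul]
    ring
  have hsign : ∀ (ε : ℤˣ) (p : R[X]), ‖(ε • p).coeff k‖ = ‖p.coeff k‖ := by
    intro ε p
    rcases Int.units_eq_one_or ε with rfl | rfl <;> simp
  rw [charpolyRev, Matrix.det_apply, finsetSum_coeff]
  refine IsUltrametricDist.norm_sum_le_of_forall_le_of_nonneg hB fun σ _ => ?_
  simp only [hsign, hentry, coeff_prod_X_mul_C_add_C]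
  refine IsUltrametricDist.norm_sum_le_of_forall_le_of_nonneg hB fun t ht => ?_
  have hdiag : ∀ i j, ‖(1 : Matrix n n R) i j‖ ≤ 1 := by
    intro i j
    rw [Matrix.one_apply]
    split_ifs <;> simp
  calc _ ≤ ‖∏ i ∈ t, -N (σ i) i‖ * ‖∏ i ∈ univ \ t, (1 : Matrix n n R) (σ i) i‖ :=
        norm_mul_le _ _
    _ ≤ ‖∏ i ∈ t, -N (σ i) i‖ :=
        mul_le_of_le_one_right (norm_nonneg _) <| (Finset.norm_prod_le _ _).trans <|
          prod_le_one (fun i _ => norm_nonneg _) fun i _ => hdiag _ _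
    _ ≤ ∏ i ∈ t, c i := (Finset.norm_prod_le _ _).trans <|
        prod_le_prod (fun i _ => norm_nonneg _) fun i _ => (norm_neg _).trans_le (hN _ _)
    _ ≤ B := hc t (mem_powersetCard.1 ht).2

theorem Finset.mul_choose_two_card_le_sum {m : ℕ} (s : Finset ℕ) (hs : ∀ i ∈ s, m ∣ i) :
    m * (#s).choose 2 ≤ ∑ i ∈ s, i := by
  induction s using Finset.induction_on_max with
  | empty => simp
  | insert a s hlt ih =>
    have ha : m ∣ a := hs a (mem_insert_self a s)
    have hs' : ∀ i ∈ s, m ∣ i := fun i hi => hs i (mem_insert_of_mem hi)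
    have hcard : #s ≤ #(range (a / m)) :=
      card_le_card_of_injOn (· / m)
        (fun i hi => mem_range.2 (Nat.div_lt_div_of_lt_of_dvd ha (hlt i hi)))
        (fun i hi j hj hij => (Nat.div_left_inj (hs' i hi) (hs' j hj)).1 hij)
    rw [card_range] at hcard
    have hma : m * #s ≤ a := (Nat.mul_le_mul_left m hcard).trans (Nat.mul_div_cancel' ha).le
    rw [card_insert_of_notMem fun h => (hlt a h).false, sum_insert fun h => (hlt a h).false,
      Nat.choose_succ_succ', Nat.choose_one_right, mul_add]
    exact add_le_add hma (ih hs')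

theorem stmt12_general {K : Type*} [NormedField K] [IsUltrametricDist K]
    (d : K) (hd1 : ‖d‖ ≤ 1) (s : ℕ)
    (N : Matrix (Fin (3 * s)) (Fin (3 * s)) K)
    (hN : ∀ i j : Fin (3 * s), ‖N i j‖ ≤ ‖d‖ ^ (j : ℕ))
    (hN3 : ∀ i j : Fin (3 * s), ¬ (3 ∣ (j : ℕ)) → N i j = 0)
    (α : ℕ) :
    ‖((1 - (Polynomial.X : Polynomial K) • N.map Polynomial.C :
        Matrix (Fin (3 * s)) (Fin (3 * s)) (Polynomial K)).det).coeff α‖ ≤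
      ‖d‖ ^ ((3 * (α * (α - 1))) / 2) := by
  have hexp : 3 * (α * (α - 1)) / 2 = 3 * α.choose 2 := by
    rw [Nat.choose_two_right, Nat.mul_div_assoc 3 (Nat.even_mul_pred_self α).two_dvd]
  rw [hexp]
  refine N.norm_coeff_charpolyRev_le (fun j => if 3 ∣ (j : ℕ) then ‖d‖ ^ (j : ℕ) else 0)
    (fun i j => ?_) (by positivity) fun t ht => ?_
  · split_ifs with h
    · exact hN i j
    · simp [hN3 i j h]
  · by_cases h3 : ∀ j ∈ t, 3 ∣ (j : ℕ)
    · rw [prod_congr rfl fun j hj => if_pos (h3 j hj), prod_pow_eq_pow_sum]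
      refine pow_le_pow_of_le_one (norm_nonneg d) hd1 ?_
      simpa [← ht] using (t.map Fin.valEmbedding).mul_choose_two_card_le_sum (by simpa using h3)
    · obtain ⟨j, hj, hj3⟩ := not_forall₂.1 h3
      rw [prod_eq_zero hj (if_neg hj3)]
      positivity

/-- Let `O` be the closed unit ball of a complete nonarchimedean field `K`, `d ≠ 0` with
`|d| ≤ 1`, and `N` a `3s × 3s` matrix with `nᵢⱼ ∈ dʲ·O` (i.e. `‖nᵢⱼ‖ ≤ ‖d‖ʲ`) and `nᵢⱼ = 0`
whenever `3 ∤ j`.  Writing `det(1 - T·N) = Σ_α a_α T^α`, we have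
`a_α / d^{3α(α-1)/2} ∈ O`, i.e. `‖a_α‖ ≤ ‖d‖^{3α(α-1)/2}`. -/
theorem stmt12 {K : Type*} [NormedField K] [CompleteSpace K] [IsUltrametricDist K]
    (d : K) (hd : d ≠ 0) (hd1 : ‖d‖ ≤ 1) (s : ℕ) (hs : 0 < s)
    (N : Matrix (Fin (3 * s)) (Fin (3 * s)) K)
    (hN : ∀ i j : Fin (3 * s), ‖N i j‖ ≤ ‖d‖ ^ (j : ℕ))
    (hN3 : ∀ i j : Fin (3 * s), ¬ (3 ∣ (j : ℕ)) → N i j = 0)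
    (α : ℕ) :
    ‖((1 - (Polynomial.X : Polynomial K) • N.map Polynomial.C :
        Matrix (Fin (3 * s)) (Fin (3 * s)) (Polynomial K)).det).coeff α‖ ≤
      ‖d‖ ^ ((3 * (α * (α - 1))) / 2) :=
  stmt12_general d hd1 s N hN hN3 α
end
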